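/- arXiv:1610.04358 — 2 statements merged into one kernel-verified Lean document; each statement's English description precedes it below -/
import Mathlib

section
/- For a two-species jump rate satisfying the compatibility condition g₁(k)g₂(k - e₁) = g₁(k - e₂)g₂(k) for all k with k₁,k₂ ≥ 1, the product of jump rates along any increasing lattice path from 0 to k is independent of the chosen path. -/
/-- `γ` is an increasing lattice path from `0` to `k`, of length `k₁ + k₂`. -/
def IsIncreasingPath (γ : ℕ → ℕ × ℕ) (k : ℕ × ℕ) : Prop :=
  γ 0 = (0, 0) ∧ γ (k.1 + k.2) = k ∧
    ∀ ℓ < k.1 + k.2, γ (ℓ + 1) = ((γ ℓ).1 + 1, (γ ℓ).2) ∨ γ (ℓ + 1) = ((γ ℓ).1, (γ ℓ).2 + 1)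

/-- The factorial of the jump rate `g = (g₁, g₂)` along the path `γ`, up to step `n`:
at each step the component of `g` used is the one in whose direction the path moved. -/
noncomputable def pathFactorial (g₁ g₂ : ℕ × ℕ → ℝ) (γ : ℕ → ℕ × ℕ) (n : ℕ) : ℝ :=
  ∏ ℓ ∈ Finset.range n,
    (if γ (ℓ + 1) = ((γ ℓ).1 + 1, (γ ℓ).2) then g₁ (γ (ℓ + 1)) else g₂ (γ (ℓ + 1)))

/-- Canonical path factorial: first go right, then up. -/
noncomputable def canonF (g₁ g₂ : ℕ × ℕ → ℝ) (k : ℕ × ℕ) : ℝ :=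
  (∏ i ∈ Finset.range k.1, g₁ (i + 1, 0)) * ∏ j ∈ Finset.range k.2, g₂ (k.1, j + 1)

lemma canonF_step₂ (g₁ g₂ : ℕ × ℕ → ℝ) (a b : ℕ) :
    canonF g₁ g₂ (a, b) * g₂ (a, b + 1) = canonF g₁ g₂ (a, b + 1) := by
  simp [canonF, Finset.prod_range_succ, mul_assoc]

lemma canonF_step₁ (g₁ g₂ : ℕ × ℕ → ℝ)
    (hcompat : ∀ k : ℕ × ℕ, 1 ≤ k.1 → 1 ≤ k.2 →
      g₁ k * g₂ (k.1 - 1, k.2) = g₁ (k.1, k.2 - 1) * g₂ k)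
    (a b : ℕ) :
    canonF g₁ g₂ (a, b) * g₁ (a + 1, b) = canonF g₁ g₂ (a + 1, b) := by
  induction b with
  | zero => simp [canonF, Finset.prod_range_succ]
  | succ b ih =>
    have hc := hcompat (a + 1, b + 1) (by simp) (by simp)
    simp only [Prod.fst, Prod.snd, Nat.add_sub_cancel] at hc
    calc canonF g₁ g₂ (a, b + 1) * g₁ (a + 1, b + 1)
        = canonF g₁ g₂ (a, b) * (g₁ (a + 1, b + 1) * g₂ (a, b + 1)) := by
          rw [← canonF_step₂]; ring
      _ = canonF g₁ g₂ (a, b) * g₁ (a + 1, b) * g₂ (a + 1, b + 1) := by rw [hc]; ring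
      _ = canonF g₁ g₂ (a + 1, b) * g₂ (a + 1, b + 1) := by rw [ih]
      _ = canonF g₁ g₂ (a + 1, b + 1) := canonF_step₂ g₁ g₂ (a + 1) b

lemma pathFactorial_eq_canonF (g₁ g₂ : ℕ × ℕ → ℝ)
    (hcompat : ∀ k : ℕ × ℕ, 1 ≤ k.1 → 1 ≤ k.2 →
      g₁ k * g₂ (k.1 - 1, k.2) = g₁ (k.1, k.2 - 1) * g₂ k)
    (n : ℕ) (γ : ℕ → ℕ × ℕ) (h0 : γ 0 = (0, 0))
    (hstep : ∀ ℓ < n, γ (ℓ + 1) = ((γ ℓ).1 + 1, (γ ℓ).2) ∨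
      γ (ℓ + 1) = ((γ ℓ).1, (γ ℓ).2 + 1)) :
    pathFactorial g₁ g₂ γ n = canonF g₁ g₂ (γ n) := by
  induction n with
  | zero => simp [pathFactorial, canonF, h0]
  | succ n ih =>
    have ih' := ih (fun ℓ hℓ => hstep ℓ (Nat.lt_succ_of_lt hℓ))
    rw [pathFactorial, Finset.prod_range_succ, ← pathFactorial, ih']
    rcases hstep n (Nat.lt_succ_self n) with h | h
    · rw [if_pos h, h]
      exact canonF_step₁ g₁ g₂ hcompat (γ n).1 (γ n).2
    · have hne : γ (n + 1) ≠ ((γ n).1 + 1, (γ n).2) := by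
        rw [h]; intro hcontra
        have := congrArg Prod.snd hcontra
        simp at this
      rw [if_neg hne, h]
      exact canonF_step₂ g₁ g₂ (γ n).1 (γ n).2

/-- For a two-species jump rate satisfying the compatibility condition
`g₁(k) g₂(k - e₁) = g₁(k - e₂) g₂(k)`, the factorial of `g` along an increasing path from `0`
to `k` does not depend on the choice of path. -/
theorem path_factorial_well_defined
    (g₁ g₂ : ℕ × ℕ → ℝ)
    (hpos₁ : ∀ k : ℕ × ℕ, 0 < k.1 → 0 < g₁ k)
    (hpos₂ : ∀ k : ℕ × ℕ, 0 < k.2 → 0 < g₂ k)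
    (hcompat : ∀ k : ℕ × ℕ, 1 ≤ k.1 → 1 ≤ k.2 →
      g₁ k * g₂ (k.1 - 1, k.2) = g₁ (k.1, k.2 - 1) * g₂ k)
    (k : ℕ × ℕ) (γ γ' : ℕ → ℕ × ℕ)
    (hγ : IsIncreasingPath γ k) (hγ' : IsIncreasingPath γ' k) :
    pathFactorial g₁ g₂ γ (k.1 + k.2) = pathFactorial g₁ g₂ γ' (k.1 + k.2) := by
  obtain ⟨h0, hk, hs⟩ := hγ
  obtain ⟨h0', hk', hs'⟩ := hγ'
  rw [pathFactorial_eq_canonF g₁ g₂ hcompat _ γ h0 hs,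
    pathFactorial_eq_canonF g₁ g₂ hcompat _ γ' h0' hs', hk, hk']
end

section
/- For the species-blind jump rate with factorial g!(k) = k₁!k₂!h!(k₁+k₂), if the one-species critical chemical potential μ̂_c = lim_{m→∞} (1/m) log h!(m)·m! exists, then for every unit direction y in the ℓ¹-sphere of ℝ₊², the directional limit (1/|k|₁) log g!(k) as |k|₁ → ∞ with k/|k|₁ → y exists and equals ⟨y, log y⟩ + μ̂_c, a continuous function of y. -/
open Filter Real

-- lower bound: n log n - n ≤ log n!
lemma log_fac_lb (n : ℕ) : (n : ℝ) * Real.log n - n ≤ Real.log n.factorial := by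
  induction n with
  | zero => simp
  | succ n ih =>
    have hfc : ((n + 1).factorial : ℝ) = ((n : ℝ) + 1) * (n.factorial : ℝ) := by
      rw [Nat.factorial_succ]; push_cast; ring
    have hlog : Real.log ((n + 1).factorial : ℝ)
        = Real.log ((n : ℝ) + 1) + Real.log (n.factorial : ℝ) := by
      rw [hfc, Real.log_mul (by positivity) (by positivity)]
    have key : (n : ℝ) * (Real.log ((n:ℝ)+1) - Real.log n) ≤ 1 := by
      rcases Nat.eq_zero_or_pos n with hn | hn
      · subst hn; simp
      · have hn0 : (0:ℝ) < n := by exact_mod_cast hn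
        have h1 : Real.log (((n:ℝ)+1)/n) ≤ ((n:ℝ)+1)/n - 1 :=
          Real.log_le_sub_one_of_pos (by positivity)
        rw [Real.log_div (by positivity) (by positivity)] at h1
        have h2 : ((n:ℝ)+1)/n - 1 = 1/n := by field_simp; ring
        rw [h2] at h1
        calc (n : ℝ) * (Real.log ((n:ℝ)+1) - Real.log n) ≤ (n:ℝ) * (1/n) := by
              exact mul_le_mul_of_nonneg_left h1 (le_of_lt hn0)
          _ = 1 := by field_simp
    push_cast
    rw [hlog]
    nlinarith [key, ih]


lemma log_fac_ub (n : ℕ) (hn : 1 ≤ n) :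
    Real.log n.factorial ≤ (n : ℝ) * Real.log n - n + 1 + Real.log n := by
  induction n, hn using Nat.le_induction with
  | base => simp
  | succ n hn ih =>
    have hn0 : (0:ℝ) < n := by exact_mod_cast hn
    have hfc : ((n + 1).factorial : ℝ) = ((n : ℝ) + 1) * (n.factorial : ℝ) := by
      rw [Nat.factorial_succ]; push_cast; ring
    have hlog : Real.log ((n + 1).factorial : ℝ)
        = Real.log ((n : ℝ) + 1) + Real.log (n.factorial : ℝ) := by
      rw [hfc, Real.log_mul (by positivity) (by positivity)]
    -- key: 1 ≤ (n+1) * (log(n+1) - log n)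
    have key : 1 ≤ ((n:ℝ) + 1) * (Real.log ((n:ℝ)+1) - Real.log n) := by
      have h1 : Real.log ((n:ℝ)/((n:ℝ)+1)) ≤ (n:ℝ)/((n:ℝ)+1) - 1 :=
        Real.log_le_sub_one_of_pos (by positivity)
      rw [Real.log_div (by positivity) (by positivity)] at h1
      have h2 : (n:ℝ)/((n:ℝ)+1) - 1 = -(1/((n:ℝ)+1)) := by field_simp; ring
      rw [h2] at h1
      have h3 : 1/((n:ℝ)+1) ≤ Real.log ((n:ℝ)+1) - Real.log n := by linarith
      calc (1:ℝ) = ((n:ℝ)+1) * (1/((n:ℝ)+1)) := by field_simp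
        _ ≤ ((n:ℝ)+1) * (Real.log ((n:ℝ)+1) - Real.log n) :=
            mul_le_mul_of_nonneg_left h3 (by positivity)
    push_cast
    rw [hlog]
    nlinarith [key, ih]

-- the Stirling remainder
noncomputable def srem (n : ℕ) : ℝ := Real.log n.factorial - (n : ℝ) * Real.log n + n

lemma srem_nonneg (n : ℕ) : 0 ≤ srem n := by
  have := log_fac_lb n; unfold srem; linarith

lemma srem_le (j M : ℕ) (hj : j ≤ M) (hM : 1 ≤ M) : srem j ≤ 1 + Real.log M := by
  have hlM : 0 ≤ Real.log M := Real.log_nonneg (by exact_mod_cast hM)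
  rcases Nat.eq_zero_or_pos j with hj0 | hj1
  · subst hj0; unfold srem; simp; linarith
  · have h1 := log_fac_ub j hj1
    have h2 : Real.log (j:ℝ) ≤ Real.log (M:ℝ) :=
      Real.log_le_log (by exact_mod_cast hj1) (by exact_mod_cast hj)
    unfold srem; linarith

lemma mul_log_div_helper (a m : ℝ) (ha : 0 ≤ a) (hm : 0 < m) :
    (a / m) * Real.log (a / m) = (a * Real.log a - a * Real.log m) / m := by
  rcases eq_or_lt_of_le ha with rfl | ha0
  · simp
  · rw [Real.log_div (ne_of_gt ha0) (ne_of_gt hm)]; field_simp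

lemma tendsto_bound : Tendsto (fun x : ℝ => 2 * (1 + Real.log x) / x) atTop (nhds 0) := by
  have h : Tendsto (fun x : ℝ => 2 * x⁻¹ + 2 * (Real.log x / x)) atTop (nhds (2 * 0 + 2 * 0)) :=
    (tendsto_inv_atTop_zero.const_mul 2).add
      (Real.isLittleO_log_id_atTop.tendsto_div_nhds_zero.const_mul 2)
  rw [show (2:ℝ) * 0 + 2 * 0 = 0 by ring] at h
  refine h.congr' ?_
  filter_upwards [eventually_gt_atTop (0:ℝ)] with x hx
  field_simp

/-- For the species-blind jump rate with factorial `g!(k) = k₁! k₂! h!(k₁+k₂)`: if the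
one-species critical chemical potential `μ̂_c = lim (1/m) log (m! h!(m))` exists, then for every
direction `y` in the ℓ¹-sphere of `ℝ₊²` the directional limit of `(1/|k|₁) log g!(k)` as
`|k|₁ → ∞`, `k/|k|₁ → y`, exists and equals `⟨y, log y⟩ + μ̂_c`, a continuous function of `y`. -/
theorem species_blind_regular_tails
    (h : ℕ → ℝ) (hpos : ∀ m : ℕ, 1 ≤ m → 0 < h m)
    (hfac : ℕ → ℝ) (hhfac : ∀ m : ℕ, hfac m = ∏ j ∈ Finset.range m, h (j + 1))
    (μc : ℝ)
    (hμc : Tendsto (fun m : ℕ => (1 / (m : ℝ)) * Real.log ((m.factorial : ℝ) * hfac m))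
      atTop (nhds μc)) :
    (∀ y₁ y₂ : ℝ, 0 ≤ y₁ → 0 ≤ y₂ → y₁ + y₂ = 1 →
      ∀ k : ℕ → ℕ × ℕ,
        Tendsto (fun n => (k n).1 + (k n).2) atTop atTop →
        Tendsto (fun n => ((k n).1 : ℝ) / ((k n).1 + (k n).2)) atTop (nhds y₁) →
        Tendsto (fun n => ((k n).2 : ℝ) / ((k n).1 + (k n).2)) atTop (nhds y₂) →
        Tendsto (fun n => (1 / (((k n).1 + (k n).2 : ℕ) : ℝ)) *
            Real.log (((k n).1.factorial : ℝ) * ((k n).2.factorial : ℝ)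
              * hfac ((k n).1 + (k n).2)))
          atTop (nhds (y₁ * Real.log y₁ + y₂ * Real.log y₂ + μc))) ∧
    ContinuousOn (fun y : ℝ × ℝ => y.1 * Real.log y.1 + y.2 * Real.log y.2 + μc)
      {y : ℝ × ℝ | 0 ≤ y.1 ∧ 0 ≤ y.2 ∧ y.1 + y.2 = 1} := by
  have hfacpos : ∀ m : ℕ, 0 < hfac m := by
    intro m
    rw [hhfac]
    exact Finset.prod_pos fun j _ => hpos (j + 1) (Nat.le_add_left 1 j)
  constructor
  · intro y₁ y₂ hy₁ hy₂ hsum k hm h1 h2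
    set m : ℕ → ℕ := fun n => (k n).1 + (k n).2 with hm_def
    -- the three pieces
    set E : ℕ → ℝ := fun n =>
      (srem (k n).1 + srem (k n).2 - srem (m n)) / (m n) with hE_def
    set P : ℕ → ℝ := fun n =>
      (((k n).1 : ℝ) / ((k n).1 + (k n).2)) * Real.log (((k n).1 : ℝ) / ((k n).1 + (k n).2))
      + (((k n).2 : ℝ) / ((k n).1 + (k n).2)) * Real.log (((k n).2 : ℝ) / ((k n).1 + (k n).2))
      with hP_def
    set B : ℕ → ℝ := fun n =>
      (1 / ((m n : ℕ) : ℝ)) * Real.log (((m n).factorial : ℝ) * hfac (m n)) with hB_def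
    -- E → 0
    have hE : Tendsto E atTop (nhds 0) := by
      have hDbig : Tendsto (fun n => 2 * (1 + Real.log ((m n : ℕ) : ℝ)) / ((m n : ℕ) : ℝ))
          atTop (nhds 0) := tendsto_bound.comp (tendsto_natCast_atTop_atTop.comp hm)
      have hDneg : Tendsto (fun n => -(2 * (1 + Real.log ((m n : ℕ) : ℝ)) / ((m n : ℕ) : ℝ)))
          atTop (nhds 0) := by simpa using hDbig.neg
      refine tendsto_of_tendsto_of_tendsto_of_le_of_le' hDneg hDbig ?_ ?_
      · filter_upwards [hm.eventually_ge_atTop 1] with n hn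
        have hm0 : (0:ℝ) < ((m n : ℕ) : ℝ) := by exact_mod_cast hn
        have hb1 := srem_le (k n).1 (m n) (Nat.le_add_right _ _) hn
        have hb2 := srem_le (k n).2 (m n) (Nat.le_add_left _ _) hn
        have hb3 := srem_le (m n) (m n) le_rfl hn
        have hn1 := srem_nonneg (k n).1
        have hn2 := srem_nonneg (k n).2
        have hn3 := srem_nonneg (m n)
        have hnum : -(2 * (1 + Real.log ((m n : ℕ) : ℝ)))
            ≤ srem (k n).1 + srem (k n).2 - srem (m n) := by
          have : (0:ℝ) ≤ 1 + Real.log ((m n : ℕ) : ℝ) := by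
            have := Real.log_nonneg (by exact_mod_cast hn : (1:ℝ) ≤ ((m n : ℕ) : ℝ))
            linarith
          linarith
        rw [hE_def]
        calc -(2 * (1 + Real.log ((m n : ℕ) : ℝ)) / ((m n : ℕ) : ℝ))
            = -(2 * (1 + Real.log ((m n : ℕ) : ℝ))) / ((m n : ℕ) : ℝ) := by ring
          _ ≤ (srem (k n).1 + srem (k n).2 - srem (m n)) / ((m n : ℕ) : ℝ) :=
              div_le_div_of_nonneg_right hnum hm0.le
      · filter_upwards [hm.eventually_ge_atTop 1] with n hn
        have hm0 : (0:ℝ) < ((m n : ℕ) : ℝ) := by exact_mod_cast hn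
        have hb1 := srem_le (k n).1 (m n) (Nat.le_add_right _ _) hn
        have hb2 := srem_le (k n).2 (m n) (Nat.le_add_left _ _) hn
        have hn3 := srem_nonneg (m n)
        have hnum : srem (k n).1 + srem (k n).2 - srem (m n)
            ≤ 2 * (1 + Real.log ((m n : ℕ) : ℝ)) := by linarith
        rw [hE_def]
        exact div_le_div_of_nonneg_right hnum hm0.le
    -- P → y₁ log y₁ + y₂ log y₂
    have hP : Tendsto P atTop (nhds (y₁ * Real.log y₁ + y₂ * Real.log y₂)) :=
      ((Real.continuous_mul_log.tendsto y₁).comp h1).add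
        ((Real.continuous_mul_log.tendsto y₂).comp h2)
    -- B → μc
    have hB : Tendsto B atTop (nhds μc) := hμc.comp hm
    have hsumT : Tendsto (fun n => E n + P n + B n) atTop
        (nhds (0 + (y₁ * Real.log y₁ + y₂ * Real.log y₂) + μc)) := (hE.add hP).add hB
    rw [show (0 + (y₁ * Real.log y₁ + y₂ * Real.log y₂) + μc)
        = y₁ * Real.log y₁ + y₂ * Real.log y₂ + μc by ring] at hsumT
    refine hsumT.congr' ?_
    filter_upwards [hm.eventually_ge_atTop 1] with n hn
    -- pointwise identity
    set a := (k n).1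
    set b := (k n).2
    have hm0 : (0:ℝ) < ((a + b : ℕ) : ℝ) := by exact_mod_cast hn
    have hm0' : (0:ℝ) < (a:ℝ) + (b:ℝ) := by push_cast at hm0 ⊢; linarith
    have hfp := hfacpos (a + b)
    have hfa : (0:ℝ) < (a.factorial : ℝ) := by exact_mod_cast a.factorial_pos
    have hfb : (0:ℝ) < (b.factorial : ℝ) := by exact_mod_cast b.factorial_pos
    have hfm : (0:ℝ) < ((a + b).factorial : ℝ) := by exact_mod_cast (a + b).factorial_pos
    have hlog1 : Real.log ((a.factorial : ℝ) * (b.factorial : ℝ) * hfac (a + b))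
        = Real.log (a.factorial : ℝ) + Real.log (b.factorial : ℝ) + Real.log (hfac (a + b)) := by
      rw [Real.log_mul (by positivity) (ne_of_gt hfp), Real.log_mul (ne_of_gt hfa) (ne_of_gt hfb)]
    have hlog2 : Real.log (((a + b).factorial : ℝ) * hfac (a + b))
        = Real.log ((a + b).factorial : ℝ) + Real.log (hfac (a + b)) := by
      rw [Real.log_mul (ne_of_gt hfm) (ne_of_gt hfp)]
    have hq1 : ((a : ℝ) / ((a : ℝ) + (b : ℝ))) * Real.log ((a : ℝ) / ((a : ℝ) + (b : ℝ)))
        = ((a : ℝ) * Real.log a - (a : ℝ) * Real.log ((a:ℝ) + (b:ℝ))) / ((a:ℝ) + (b:ℝ)) :=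
      mul_log_div_helper _ _ (by positivity) hm0'
    have hq2 : ((b : ℝ) / ((a : ℝ) + (b : ℝ))) * Real.log ((b : ℝ) / ((a : ℝ) + (b : ℝ)))
        = ((b : ℝ) * Real.log b - (b : ℝ) * Real.log ((a:ℝ) + (b:ℝ))) / ((a:ℝ) + (b:ℝ)) :=
      mul_log_div_helper _ _ (by positivity) hm0'
    show E n + P n + B n
        = (1 / ((a + b : ℕ) : ℝ)) * Real.log ((a.factorial : ℝ) * (b.factorial : ℝ) * hfac (a + b))
    simp only [hE_def, hP_def, hB_def, hm_def]
    unfold srem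
    rw [hlog1, hlog2]
    push_cast
    rw [hq1, hq2]
    have hcm : Real.log ((a:ℝ) + (b:ℝ)) = Real.log ((a:ℝ) + (b:ℝ)) := rfl
    have hne : ((k n).1 : ℝ) + ((k n).2 : ℝ) ≠ 0 := ne_of_gt hm0'
    field_simp
    ring
  · exact (((Real.continuous_mul_log.comp continuous_fst).add
      (Real.continuous_mul_log.comp continuous_snd)).add continuous_const).continuousOn
end
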